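/- Let (Ω,μ) be a probability space, φ a strictly increasing Young function with Legendre transform φ*, and x a bounded measurable real function satisfying ∫ e^{t x} dμ ≤ e^{φ(t)} for all t ≥ 0. Then for every probability density ρ ≥ 0 with ∫ ρ dμ = 1, one has ∫ x ρ dμ ≤ (φ*)^{-1}(Ent(ρ)), where Ent(ρ) = ∫ ρ log ρ dμ and (φ*)^{-1}(z) = sup{s : φ*(s) ≤ z}. -/

import Mathlib

/-!
For `t ≥ 0`, the Gibbs variational inequality with `f = t x` gives
`t ∫ x ρ - log ∫ e^{t x} ≤ Ent ρ`, and the hypothesis `log ∫ e^{t x} ≤ φ t` turns this into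
`t ∫ x ρ - φ t ≤ Ent ρ`; so `∫ x ρ` belongs to the set whose supremum is `(φ*)⁻¹ (Ent ρ)`
as soon as it is nonnegative, while a negative `∫ x ρ` lies below that nonnegative supremum.
-/

open MeasureTheory Real

lemma mul_le_exp_add_mul_log_sub (u : ℝ) {v : ℝ} (hv : 0 ≤ v) :
    u * v ≤ exp u + v * log v - v := by
  rcases hv.eq_or_lt with rfl | hv
  · simp [(exp_pos u).le]
  · have key : v * (u - log v + 1) ≤ v * (exp u / v) := by
      gcongr
      rw [← exp_log hv, ← exp_sub, exp_log hv]
      exact add_one_le_exp _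
    rw [mul_div_cancel₀ _ hv.ne'] at key
    linarith

section Gibbs

variable {Ω : Type*} [MeasurableSpace Ω] {μ : Measure Ω} {ρ f : Ω → ℝ}

lemma integral_mul_le_integral_exp_add_integral_mul_log_sub_one (hρ0 : ∀ ω, 0 ≤ ρ ω)
    (hρint : Integrable ρ μ) (hρ1 : ∫ ω, ρ ω ∂μ = 1)
    (hent : Integrable (fun ω => ρ ω * log (ρ ω)) μ)
    (hfρ : Integrable (fun ω => f ω * ρ ω) μ) (hef : Integrable (fun ω => exp (f ω)) μ) :
    ∫ ω, f ω * ρ ω ∂μ ≤ ∫ ω, exp (f ω) ∂μ + ∫ ω, ρ ω * log (ρ ω) ∂μ - 1 := by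
  calc ∫ ω, f ω * ρ ω ∂μ ≤ ∫ ω, (exp (f ω) + ρ ω * log (ρ ω) - ρ ω) ∂μ :=
        integral_mono hfρ ((hef.add hent).sub hρint)
          fun ω => mul_le_exp_add_mul_log_sub _ (hρ0 ω)
    _ = ∫ ω, exp (f ω) ∂μ + ∫ ω, ρ ω * log (ρ ω) ∂μ - 1 := by
        have hsum : Integrable (fun ω => exp (f ω) + ρ ω * log (ρ ω)) μ := hef.add hent
        rw [integral_sub hsum hρint, integral_add hef hent, hρ1]

/-- The Gibbs variational inequality. -/
lemma integral_mul_le_log_integral_exp_add_integral_mul_log (hρ0 : ∀ ω, 0 ≤ ρ ω)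
    (hρint : Integrable ρ μ) (hρ1 : ∫ ω, ρ ω ∂μ = 1)
    (hent : Integrable (fun ω => ρ ω * log (ρ ω)) μ)
    (hfρ : Integrable (fun ω => f ω * ρ ω) μ) (hef : Integrable (fun ω => exp (f ω)) μ) :
    ∫ ω, f ω * ρ ω ∂μ ≤ log (∫ ω, exp (f ω) ∂μ) + ∫ ω, ρ ω * log (ρ ω) ∂μ := by
  have : NeZero μ := ⟨by rintro rfl; simp at hρ1⟩
  set c := log (∫ ω, exp (f ω) ∂μ)
  have hZ : exp c = ∫ ω, exp (f ω) ∂μ := exp_log (integral_exp_pos hef)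
  -- Normalize `f` so that `∫ exp f = 1`.
  have hexp_sub : ∀ ω, exp (f ω - c) = exp (f ω) / exp c := fun ω => exp_sub _ _
  have key := integral_mul_le_integral_exp_add_integral_mul_log_sub_one (f := fun ω => f ω - c)
    hρ0 hρint hρ1 hent
    ((hfρ.sub (hρint.const_mul c)).congr (.of_forall fun ω => (sub_mul (f ω) c (ρ ω)).symm))
    (by simpa only [hexp_sub] using hef.div_const (exp c))
  simp only [sub_mul, hexp_sub] at key
  rw [integral_sub hfρ (hρint.const_mul c), integral_const_mul, hρ1, integral_div, hZ,
    div_self (hZ ▸ exp_pos c).ne'] at key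
  linarith

lemma integrable_exp_mul_of_abs_le [IsFiniteMeasure μ] {x : Ω → ℝ} (hx : Measurable x) {M : ℝ} (hbdd : ∀ ω, |x ω| ≤ M)
    (t : ℝ) : Integrable (fun ω => exp (t * x ω)) μ := by
  refine .of_bound (hx.const_mul t).exp.aestronglyMeasurable (exp (|t| * M)) (.of_forall ?_)
  intro ω
  rw [norm_of_nonneg (exp_pos _).le, exp_le_exp]
  calc t * x ω ≤ |t| * |x ω| := by rw [← abs_mul]; exact le_abs_self _
    _ ≤ |t| * M := by gcongr; exact hbdd ω

end Gibbs

theorem stmt8_general {Ω : Type*} [MeasurableSpace Ω] (μ : Measure Ω) [IsProbabilityMeasure μ]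
    (φ : ℝ → ℝ)
    (x : Ω → ℝ) (hx : Measurable x) (M : ℝ) (hbdd : ∀ ω, |x ω| ≤ M)
    (hexp : ∀ t : ℝ, 0 ≤ t → ∫ ω, Real.exp (t * x ω) ∂μ ≤ Real.exp (φ t))
    (ρ : Ω → ℝ) (hρ0 : ∀ ω, 0 ≤ ρ ω)
    (hρint : Integrable ρ μ) (hρ1 : ∫ ω, ρ ω ∂μ = 1)
    (hent : Integrable (fun ω => ρ ω * Real.log (ρ ω)) μ) :
    ∫ ω, x ω * ρ ω ∂μ ≤
      sSup {s : ℝ | 0 ≤ s ∧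
        ∀ t : ℝ, 0 ≤ t → t * s - φ t ≤ ∫ ω, ρ ω * Real.log (ρ ω) ∂μ} := by
  have hxρ : Integrable (fun ω => x ω * ρ ω) μ :=
    hρint.bdd_mul hx.aestronglyMeasurable (.of_forall fun ω => hbdd ω)
  have hgibbs : ∀ t : ℝ, 0 ≤ t →
      t * ∫ ω, x ω * ρ ω ∂μ - φ t ≤ ∫ ω, ρ ω * log (ρ ω) ∂μ := by
    intro t ht
    have hef := integrable_exp_mul_of_abs_le (μ := μ) hx hbdd t
    have hlog : log (∫ ω, exp (t * x ω) ∂μ) ≤ φ t :=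
      (log_le_iff_le_exp (integral_exp_pos hef)).2 (hexp t ht)
    have hvar := integral_mul_le_log_integral_exp_add_integral_mul_log hρ0 hρint hρ1 hent
      (by simpa only [mul_assoc] using hxρ.const_mul t) hef
    simp only [mul_assoc, integral_const_mul] at hvar
    linarith
  rcases lt_or_ge (∫ ω, x ω * ρ ω ∂μ) 0 with hneg | hnonneg
  · exact hneg.le.trans (Real.sSup_nonneg fun s hs => hs.1)
  · have hbdd_above : BddAbove {s : ℝ | 0 ≤ s ∧
        ∀ t : ℝ, 0 ≤ t → t * s - φ t ≤ ∫ ω, ρ ω * Real.log (ρ ω) ∂μ} :=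
      ⟨φ 1 + ∫ ω, ρ ω * log (ρ ω) ∂μ, fun s hs => by linarith [hs.2 1 zero_le_one]⟩
    exact le_csSup hbdd_above ⟨hnonneg, hgibbs⟩

theorem stmt8 {Ω : Type*} [MeasurableSpace Ω] (μ : Measure Ω) [IsProbabilityMeasure μ]
    (φ : ℝ → ℝ) (hconv : ConvexOn ℝ (Set.Ici (0 : ℝ)) φ)
    (hmono : StrictMonoOn φ (Set.Ici (0 : ℝ))) (hφ0 : φ 0 = 0)
    (x : Ω → ℝ) (hx : Measurable x) (M : ℝ) (hbdd : ∀ ω, |x ω| ≤ M)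
    (hexp : ∀ t : ℝ, 0 ≤ t → ∫ ω, Real.exp (t * x ω) ∂μ ≤ Real.exp (φ t))
    (ρ : Ω → ℝ) (hρ : Measurable ρ) (hρ0 : ∀ ω, 0 ≤ ρ ω)
    (hρint : Integrable ρ μ) (hρ1 : ∫ ω, ρ ω ∂μ = 1)
    (hent : Integrable (fun ω => ρ ω * Real.log (ρ ω)) μ) :
    ∫ ω, x ω * ρ ω ∂μ ≤
      sSup {s : ℝ | 0 ≤ s ∧
        ∀ t : ℝ, 0 ≤ t → t * s - φ t ≤ ∫ ω, ρ ω * Real.log (ρ ω) ∂μ} :=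
  stmt8_general μ φ x hx M hbdd hexp ρ hρ0 hρint hρ1 hent
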